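/- arXiv:2006.02300 — 3 statements merged into one kernel-verified Lean document; each statement's English description precedes it below -/
import Mathlib

section
/- Let θ ∈ (0, π/2) and let λ be a complex number with |arg λ| < π - θ (i.e. λ ∈ Σ_θ). Then there exists a constant c = c(θ) > 0 such that Re √(λ + r²) ≥ c (|λ|^{1/2} + r) for all r ≥ 0, where √ denotes the principal square root. -/
/-!
Put `μ = λ + r²`. The sector condition says `Re λ ≥ -cos θ · |λ|`, and adding the nonnegative
real `r²` keeps `μ` in the same sector, so `Re μ ≥ -cos θ · |μ|`. Expanding `|λ + r²|²` with the
sector condition gives `|μ| ≥ k (|λ| + r²)` for `k = (1 - cos θ) / 2`. Finally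
`(Re √μ)² = (|μ| + Re μ) / 2 ≥ k |μ| ≥ k² (|λ| + r²) ≥ (k / 2)² (|λ|^{1/2} + r)²`.
-/

open Real

namespace Complex

theorem cos_mul_norm_le_re_of_abs_arg_le {z : ℂ} {φ : ℝ} (hφ : φ ≤ π) (h : |z.arg| ≤ φ) :
    Real.cos φ * ‖z‖ ≤ z.re := by
  rcases eq_or_ne z 0 with rfl | hz
  · simp
  have hcos : Real.cos φ ≤ z.re / ‖z‖ := by
    rw [← cos_arg hz, ← Real.cos_abs z.arg]
    exact Real.cos_le_cos_of_nonneg_of_le_pi (abs_nonneg _) hφ h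
  rwa [le_div_iff₀ (norm_pos_iff.mpr hz)] at hcos

section Cone

variable {z : ℂ} {γ t : ℝ}

theorem mul_norm_add_ofReal_le_re (hγ₁ : -1 ≤ γ) (hγ₀ : γ ≤ 0) (ht : 0 ≤ t)
    (hz : γ * ‖z‖ ≤ z.re) : γ * ‖z + t‖ ≤ (z + t).re := by
  have htri : ‖z‖ ≤ ‖z + t‖ + t := by
    simpa [abs_of_nonneg ht] using norm_sub_le (z + t) (t : ℂ)
  rw [add_re, ofReal_re]
  nlinarith

theorem mul_norm_add_le_norm_add_ofReal (hγ₁ : -1 ≤ γ) (hγ : γ ≤ 1) (ht : 0 ≤ t)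
    (hz : γ * ‖z‖ ≤ z.re) : (1 + γ) / 2 * (‖z‖ + t) ≤ ‖z + t‖ := by
  have hsq : ‖z + t‖ ^ 2 = ‖z‖ ^ 2 + 2 * t * z.re + t ^ 2 := by
    rw [Complex.sq_norm, Complex.sq_norm, normSq_apply, normSq_apply]
    simp only [add_re, add_im, ofReal_re, ofReal_im, add_zero]
    ring
  -- the difference is at least `(1 - γ) / 2 · (‖z‖ - t)²`
  have hmul_sq : (1 + γ) / 2 * (‖z‖ + t) ^ 2 ≤ ‖z + t‖ ^ 2 := by
    rw [hsq]
    nlinarith [sq_nonneg (‖z‖ - t), mul_le_mul_of_nonneg_left hz ht]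
  have hcoef : ((1 + γ) / 2) ^ 2 ≤ (1 + γ) / 2 := by nlinarith
  have hlhs : 0 ≤ (1 + γ) / 2 * (‖z‖ + t) := mul_nonneg (by linarith) (by positivity)
  refine (pow_le_pow_iff_left₀ hlhs (norm_nonneg _) two_ne_zero).mp ?_
  calc ((1 + γ) / 2 * (‖z‖ + t)) ^ 2 = ((1 + γ) / 2) ^ 2 * (‖z‖ + t) ^ 2 := by ring
    _ ≤ (1 + γ) / 2 * (‖z‖ + t) ^ 2 := by gcongr
    _ ≤ ‖z + t‖ ^ 2 := hmul_sq

end Cone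

end Complex

theorem stmt4 (θ : ℝ) (hθ : θ ∈ Set.Ioo 0 (Real.pi / 2)) :
    ∃ c : ℝ, 0 < c ∧ ∀ lam : ℂ, lam ≠ 0 → |lam.arg| < Real.pi - θ →
      ∀ r : ℝ, 0 ≤ r →
        c * (‖lam‖ ^ (1/2 : ℝ) + r)
          ≤ ((lam + (r : ℂ) ^ 2) ^ (1/2 : ℂ)).re := by
  obtain ⟨hθ₀, hθ₁⟩ := hθ
  have hcos₀ : 0 < cos θ := cos_pos_of_mem_Ioo ⟨by linarith, hθ₁⟩
  have hcos₁ : cos θ < 1 := by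
    simpa using cos_lt_cos_of_nonneg_of_le_pi le_rfl (by linarith [pi_pos]) hθ₀
  set k := (1 - cos θ) / 2 with hk
  refine ⟨k / 2, by positivity, fun lam _ harg r hr => ?_⟩
  rw [← sqrt_eq_rpow, one_div, ← Complex.ofReal_pow, Complex.cpow_inv_two_re]
  have hlam : -cos θ * ‖lam‖ ≤ lam.re := by
    simpa [cos_pi_sub] using
      Complex.cos_mul_norm_le_re_of_abs_arg_le (by linarith) harg.le
  have hμ_re := Complex.mul_norm_add_ofReal_le_re (by linarith) (by linarith) (sq_nonneg r) hlam
  have hμ_norm : k * (‖lam‖ + r ^ 2) ≤ ‖lam + ((r ^ 2 : ℝ) : ℂ)‖ := by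
    simpa [hk, sub_eq_add_neg] using
      Complex.mul_norm_add_le_norm_add_ofReal (by linarith) (by linarith) (sq_nonneg r) hlam
  generalize lam + ((r ^ 2 : ℝ) : ℂ) = μ at hμ_re hμ_norm ⊢
  have hre_sq : k ^ 2 * (‖lam‖ + r ^ 2) ≤ (‖μ‖ + μ.re) / 2 :=
    calc k ^ 2 * (‖lam‖ + r ^ 2) = k * (k * (‖lam‖ + r ^ 2)) := by ring
      _ ≤ k * ‖μ‖ := by gcongr
      _ ≤ (‖μ‖ + μ.re) / 2 := by rw [hk]; linarith
  refine le_sqrt_of_sq_le ?_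
  nlinarith [add_sq_le (a := √‖lam‖) (b := r), sq_sqrt (norm_nonneg lam)]
end

section
/- Let θ ∈ (0, π/2), α a positive integer, and t > 0. There exist constants c, C > 0 depending only on θ and α such that for all λ ∈ Σ_θ and all ξ' ∈ ℝ² \ {0}, |ξ'|^α · |e^{-t s_λ}| ≤ C e^{-c t |λ|^{1/2}} / t^α, where s_λ = (λ + |ξ'|²)^{1/2} with principal square root. -/
/-!
Put `k = cos θ`, so that `λ ∈ Σ_θ` gives `Re λ ≥ -k |λ|`. This sector condition survives adding
the positive number `μ = |ξ'|²`, and it also forces `|λ + μ| ≥ (1 - k)/2 · (|λ| + μ)`. Since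
`(Re √w)² = (|w| + Re w)/2`, the two facts give `Re s_λ ≥ (1 - k)/4 · (|λ|^{1/2} + |ξ'|)`.
Hence `|e^{-t s_λ}| ≤ e^{-ct|λ|^{1/2}} e^{-ct|ξ'|}`, and `x^α e^{-x} ≤ α!` absorbs `|ξ'|^α`.
-/

open Real

namespace Complex

theorem neg_cos_mul_norm_le_re {θ : ℝ} (hθ : 0 ≤ θ) {z : ℂ} (hz : |z.arg| ≤ π - θ) :
    -(Real.cos θ * ‖z‖) ≤ z.re := by
  have hcos : Real.cos (π - θ) ≤ Real.cos |z.arg| :=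
    Real.cos_le_cos_of_nonneg_of_le_pi (abs_nonneg _) (by linarith) hz
  rw [Real.cos_pi_sub, Real.cos_abs] at hcos
  rw [← norm_mul_cos_arg z]
  nlinarith [norm_nonneg z]

theorem neg_mul_norm_le_re_add_ofReal {k : ℝ} (hk : -1 ≤ k) {z : ℂ} (hz : -(k * ‖z‖) ≤ z.re)
    {μ : ℝ} (hμ : 0 ≤ μ) : -(k * ‖z + μ‖) ≤ (z + μ).re := by
  rcases lt_or_ge k 0 with hk0 | hk0
  · have htri : ‖z + μ‖ ≤ ‖z‖ + μ := by
      simpa [abs_of_nonneg hμ] using norm_add_le z (μ : ℂ)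
    rw [add_re, ofReal_re]
    nlinarith
  rcases le_or_gt 0 (z + μ).re with hre | hre
  · nlinarith [norm_nonneg (z + μ)]
  rcases le_or_gt 1 k with hk1 | hk1
  · nlinarith [neg_abs_le (z + μ).re, abs_re_le_norm (z + μ), norm_nonneg (z + μ)]
  have hre' : (z + μ).re = z.re + μ := by simp
  have hnorm_sq : ‖z + μ‖ ^ 2 = (z.re + μ) ^ 2 + z.im ^ 2 := by
    simp only [Complex.sq_norm, normSq_apply, add_re, ofReal_re, add_im, ofReal_im, add_zero]
    ring
  have hz_sq : z.re ^ 2 ≤ k ^ 2 * (z.re ^ 2 + z.im ^ 2) := by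
    have h := pow_le_pow_left₀ (by linarith) (neg_le.mp hz) 2
    rwa [neg_sq, mul_pow, Complex.sq_norm, normSq_apply, ← sq, ← sq] at h
  -- Moving `z` towards the imaginary axis keeps `(1 - k²) Re² ≤ k² Im²`.
  have hsq : ((z + μ).re) ^ 2 ≤ (k * ‖z + μ‖) ^ 2 := by
    rw [mul_pow, hnorm_sq, hre']
    nlinarith [mul_le_mul_of_nonneg_left (by nlinarith : (z.re + μ) ^ 2 ≤ z.re ^ 2)
      (by nlinarith : (0 : ℝ) ≤ 1 - k ^ 2)]
  nlinarith [abs_le_of_sq_le_sq' hsq (by positivity)]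

theorem mul_add_sq_le_norm_add_ofReal_sq {k : ℝ} (hk : -1 ≤ k) {z : ℂ}
    (hz : -(k * ‖z‖) ≤ z.re) {μ : ℝ} (hμ : 0 ≤ μ) :
    (1 - k) / 2 * (‖z‖ + μ) ^ 2 ≤ ‖z + μ‖ ^ 2 := by
  have hexpand : ‖z + μ‖ ^ 2 = ‖z‖ ^ 2 + 2 * μ * z.re + μ ^ 2 := by
    simp only [Complex.sq_norm, normSq_apply, add_re, ofReal_re, add_im, ofReal_im, add_zero]
    ring
  -- the difference is `(1 + k)/2 · (‖z‖ - μ)²` plus `2μ (Re z + k ‖z‖)`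
  nlinarith [mul_nonneg (by linarith : (0 : ℝ) ≤ 1 + k) (sq_nonneg (‖z‖ - μ)),
    mul_le_mul_of_nonneg_left hz hμ]

theorem mul_sqrt_norm_add_abs_le_re_cpow_half {k : ℝ} (hk : -1 ≤ k) (hk1 : k ≤ 1) {z : ℂ}
    (hz : -(k * ‖z‖) ≤ z.re) (r : ℝ) :
    (1 - k) / 4 * (√‖z‖ + |r|) ≤ ((z + (r : ℂ) ^ 2) ^ (1 / 2 : ℂ)).re := by
  set κ := (1 - k) / 2
  have hκ : 0 ≤ κ := by simp only [κ]; linarith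
  have hκ1 : κ ≤ 1 := by simp only [κ]; linarith
  have hr2 : (r : ℂ) ^ 2 = ((r ^ 2 : ℝ) : ℂ) := by push_cast; ring
  rw [hr2, one_div, cpow_inv_two_re]
  set w := z + ((r ^ 2 : ℝ) : ℂ)
  have hw : -(k * ‖w‖) ≤ w.re := neg_mul_norm_le_re_add_ofReal hk hz (sq_nonneg r)
  have hnorm : κ * (‖z‖ + r ^ 2) ≤ ‖w‖ := by
    refine abs_le_of_sq_le_sq' ?_ (norm_nonneg w) |>.2
    calc (κ * (‖z‖ + r ^ 2)) ^ 2 = κ * κ * (‖z‖ + r ^ 2) ^ 2 := by ring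
      _ ≤ κ * (‖z‖ + r ^ 2) ^ 2 := by gcongr; nlinarith
      _ ≤ ‖w‖ ^ 2 := mul_add_sq_le_norm_add_ofReal_sq hk hz (sq_nonneg r)
  have hsum_sq : (√‖z‖ + |r|) ^ 2 ≤ 2 * (‖z‖ + r ^ 2) := by
    nlinarith [sq_sqrt (norm_nonneg z), sq_abs r, sq_nonneg (√‖z‖ - |r|)]
  rw [le_sqrt (by positivity) (by linarith [neg_abs_le w.re, abs_re_le_norm w])]
  calc ((1 - k) / 4 * (√‖z‖ + |r|)) ^ 2 = κ ^ 2 / 4 * (√‖z‖ + |r|) ^ 2 := by ring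
    _ ≤ κ ^ 2 / 4 * (2 * (‖z‖ + r ^ 2)) := by gcongr
    _ ≤ κ * (κ * (‖z‖ + r ^ 2)) := by nlinarith [norm_nonneg z, sq_nonneg r, sq_nonneg κ]
    _ ≤ κ * ‖w‖ := by gcongr
    _ ≤ (‖w‖ + w.re) / 2 := by simp only [κ]; linarith

end Complex

theorem Real.pow_mul_exp_neg_mul_le (n : ℕ) {a x : ℝ} (ha : 0 < a) (hx : 0 ≤ x) :
    x ^ n * exp (-(a * x)) ≤ n.factorial / a ^ n := by
  have h := pow_div_factorial_le_exp (a * x) (by positivity) n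
  rw [div_le_iff₀ (by positivity)] at h
  rw [le_div_iff₀ (by positivity), exp_neg, mul_comm (x ^ n), mul_assoc, ← mul_pow,
    inv_mul_le_iff₀ (exp_pos _), mul_comm x]
  exact h

theorem stmt5_general (θ : ℝ) (hθ : θ ∈ Set.Ioo 0 (Real.pi / 2)) (α : ℕ) :
    ∃ c C : ℝ, 0 < c ∧ 0 < C ∧
      ∀ t : ℝ, 0 < t → ∀ lam : ℂ, lam ≠ 0 → |lam.arg| < Real.pi - θ →
        ∀ ξ : EuclideanSpace ℝ (Fin 2), ξ ≠ 0 →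
          ‖ξ‖ ^ α *
              ‖Complex.exp (-(t : ℂ) * (lam + (‖ξ‖ : ℂ) ^ 2) ^ (1/2 : ℂ))‖
            ≤ C * Real.exp (-c * t * ‖lam‖ ^ (1/2 : ℝ)) / t ^ α := by
  have hcos : cos θ < 1 := by
    simpa using cos_lt_cos_of_nonneg_of_le_pi le_rfl (by linarith [pi_pos, hθ.2]) hθ.1
  set c := (1 - cos θ) / 4
  have hc : 0 < c := by simp only [c]; linarith
  refine ⟨c, α.factorial / c ^ α, hc, by positivity, fun t ht lam _ harg ξ _ => ?_⟩
  set s := (lam + (‖ξ‖ : ℂ) ^ 2) ^ (1 / 2 : ℂ)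
  have hs : c * (√‖lam‖ + ‖ξ‖) ≤ s.re := by
    simpa only [abs_norm] using Complex.mul_sqrt_norm_add_abs_le_re_cpow_half
      (neg_one_le_cos θ) (cos_le_one θ) (Complex.neg_cos_mul_norm_le_re hθ.1.le harg.le) ‖ξ‖
  have hexp : ‖Complex.exp (-(t : ℂ) * s)‖ ≤ exp (-c * t * √‖lam‖) * exp (-(c * t * ‖ξ‖)) := by
    rw [Complex.norm_exp, ← exp_add, exp_le_exp]
    simp only [neg_mul, Complex.neg_re, Complex.re_ofReal_mul]
    nlinarith [mul_le_mul_of_nonneg_left hs ht.le]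
  rw [← sqrt_eq_rpow]
  calc ‖ξ‖ ^ α * ‖Complex.exp (-(t : ℂ) * s)‖
      ≤ exp (-c * t * √‖lam‖) * (‖ξ‖ ^ α * exp (-(c * t * ‖ξ‖))) := by
        nlinarith [mul_le_mul_of_nonneg_left hexp (by positivity : (0 : ℝ) ≤ ‖ξ‖ ^ α)]
    _ ≤ exp (-c * t * √‖lam‖) * (α.factorial / (c * t) ^ α) := by
        gcongr
        exact pow_mul_exp_neg_mul_le α (by positivity) (norm_nonneg ξ)
    _ = α.factorial / c ^ α * exp (-c * t * √‖lam‖) / t ^ α := by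
        rw [mul_pow]; field_simp

theorem stmt5 (θ : ℝ) (hθ : θ ∈ Set.Ioo 0 (Real.pi / 2)) (α : ℕ) (hα : 0 < α) :
    ∃ c C : ℝ, 0 < c ∧ 0 < C ∧
      ∀ t : ℝ, 0 < t → ∀ lam : ℂ, lam ≠ 0 → |lam.arg| < Real.pi - θ →
        ∀ ξ : EuclideanSpace ℝ (Fin 2), ξ ≠ 0 →
          ‖ξ‖ ^ α *
              ‖Complex.exp (-(t : ℂ) * (lam + (‖ξ‖ : ℂ) ^ 2) ^ (1/2 : ℂ))‖
            ≤ C * Real.exp (-c * t * ‖lam‖ ^ (1/2 : ℝ)) / t ^ α :=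
  stmt5_general θ hθ α
end

section
/- Let θ ∈ (0, π/2). There exist constants c, C > 0 depending only on θ such that for all λ ∈ Σ_θ and all ξ' ∈ ℝ², |e^{-s_λ}/s_λ| ≤ C |λ|^{-1/2} e^{-c |λ|^{1/2}}, where s_λ = (λ + |ξ'|²)^{1/2} with principal square root. -/
/-!
For `λ` in the sector and `t = |ξ'|² ≥ 0`, either `Re λ ≥ 0` or `|Im λ| ≥ sin θ |λ|`. In both cases
`w = λ + t` satisfies `|w| ≥ sin θ |λ|` and `|w| + Re w ≥ sin² θ |λ| / 2`; the latter because when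
`Re w < 0` one has `|w| ≤ |λ|` and `(Im w)² = (|w| + Re w)(|w| - Re w) ≤ 2 |w| (|w| + Re w)`.
Since `|√w| = √|w|` and `Re √w = √((|w| + Re w) / 2)`, this gives `|s_λ| ≥ √(sin θ) |λ|^{1/2}` and
`Re s_λ ≥ (sin θ / 2) |λ|^{1/2}`, and `|e^{-s}/s| = e^{-Re s}/|s|`.
-/

open Real

namespace Complex

theorem re_nonneg_or_sin_mul_norm_le_abs_im {z : ℂ} {θ : ℝ} (hθ : 0 ≤ θ)
    (hz : |z.arg| < π - θ) : 0 ≤ z.re ∨ Real.sin θ * ‖z‖ ≤ |z.im| := by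
  by_cases! hre : 0 ≤ z.re
  · exact .inl hre
  right
  have hz0 : z ≠ 0 := by rintro rfl; simp at hre
  have harg : π / 2 < |z.arg| := lt_of_not_ge (mt abs_arg_le_pi_div_two_iff.mp hre.not_ge)
  have hsin : Real.sin θ ≤ Real.sin |z.arg| := by
    rw [← Real.sin_pi_sub |z.arg|]
    exact Real.sin_le_sin_of_le_of_le_pi_div_two (by linarith) (by linarith) (by linarith)
  rwa [← abs_sin_eq_sin_abs_of_abs_le_pi (abs_arg_le_pi z), sin_arg, abs_div, abs_norm,
    le_div_iff₀ (norm_pos_iff.mpr hz0)] at hsin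

theorem norm_le_norm_of_abs_re_le_of_abs_im_le {z w : ℂ} (hre : |z.re| ≤ |w.re|)
    (him : |z.im| ≤ |w.im|) : ‖z‖ ≤ ‖w‖ := by
  rw [norm_def, norm_def, normSq_apply, normSq_apply, ← sq, ← sq, ← sq, ← sq]
  exact Real.sqrt_le_sqrt (add_le_add (sq_le_sq.mpr hre) (sq_le_sq.mpr him))

theorem sq_im_le_two_mul_norm_mul_norm_add_re (w : ℂ) : w.im ^ 2 ≤ 2 * ‖w‖ * (‖w‖ + w.re) := by
  have hw : ‖w‖ ^ 2 = w.re ^ 2 + w.im ^ 2 := by rw [Complex.sq_norm, normSq_apply]; ring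
  have hre := abs_le.mp (abs_re_le_norm w)
  nlinarith [mul_nonneg (by linarith : 0 ≤ ‖w‖ + w.re) (by linarith : 0 ≤ ‖w‖ + w.re)]

theorem norm_cpow_one_half (w : ℂ) : ‖w ^ (1 / 2 : ℂ)‖ = √‖w‖ := by
  rw [← ofReal_one, ← ofReal_ofNat, ← ofReal_div, norm_cpow_real, Real.sqrt_eq_rpow]

theorem re_cpow_one_half (w : ℂ) : (w ^ (1 / 2 : ℂ)).re = √((‖w‖ + w.re) / 2) := by
  rw [one_div, cpow_inv_two_re]

section Sector

variable {z : ℂ} {s t : ℝ}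

theorem mul_norm_le_norm_add_ofReal (hs : s ≤ 1) (hz : 0 ≤ z.re ∨ s * ‖z‖ ≤ |z.im|)
    (ht : 0 ≤ t) : s * ‖z‖ ≤ ‖z + t‖ := by
  rcases hz with hre | him
  · refine (mul_le_of_le_one_left (norm_nonneg z) hs).trans
      (norm_le_norm_of_abs_re_le_of_abs_im_le ?_ (by simp))
    rw [add_re, ofReal_re, abs_of_nonneg hre, abs_of_nonneg (by linarith)]
    linarith
  · simpa using him.trans (by simpa using abs_im_le_norm (z + t))

theorem sq_mul_norm_le_two_mul_norm_add_re (hs₀ : 0 ≤ s) (hs₁ : s ≤ 1)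
    (hz : 0 ≤ z.re ∨ s * ‖z‖ ≤ |z.im|) (ht : 0 ≤ t) :
    s ^ 2 * ‖z‖ ≤ 2 * (‖z + t‖ + (z + t).re) := by
  have hnorm := mul_norm_le_norm_add_ofReal hs₁ hz ht
  by_cases! hwre : 0 ≤ (z + t).re
  · nlinarith [mul_nonneg (mul_nonneg hs₀ (sub_nonneg.mpr hs₁)) (norm_nonneg z),
      norm_nonneg (z + t)]
  have hre : z.re + t < 0 := by simpa using hwre
  have him : s * ‖z‖ ≤ |z.im| := hz.resolve_left (by linarith)
  have hwz : ‖z + t‖ ≤ ‖z‖ := by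
    refine norm_le_norm_of_abs_re_le_of_abs_im_le ?_ (by simp)
    rw [add_re, ofReal_re, abs_of_neg hre, abs_of_neg (by linarith)]
    linarith
  have hsq := sq_im_le_two_mul_norm_mul_norm_add_re (z + t)
  rw [add_im, ofReal_im, add_zero] at hsq
  have hpos : 0 ≤ ‖z + t‖ + (z + t).re := by
    linarith [neg_abs_le (z + t).re, abs_re_le_norm (z + t)]
  have hprod : ‖z‖ * (s ^ 2 * ‖z‖) ≤ ‖z‖ * (2 * (‖z + t‖ + (z + t).re)) :=
    calc ‖z‖ * (s ^ 2 * ‖z‖) = (s * ‖z‖) ^ 2 := by ring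
      _ ≤ z.im ^ 2 := by rw [← sq_abs z.im]; gcongr
      _ ≤ 2 * ‖z + t‖ * (‖z + t‖ + (z + t).re) := hsq
      _ ≤ _ := by nlinarith
  rcases (norm_nonneg z).eq_or_lt with hz0 | hz0
  · rw [← hz0, mul_zero]
    positivity
  · exact le_of_mul_le_mul_left hprod hz0

theorem sqrt_mul_sqrt_norm_le_norm_cpow_one_half (hs₀ : 0 ≤ s) (hs₁ : s ≤ 1)
    (hz : 0 ≤ z.re ∨ s * ‖z‖ ≤ |z.im|) (ht : 0 ≤ t) :
    √s * √‖z‖ ≤ ‖(z + t) ^ (1 / 2 : ℂ)‖ := by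
  rw [norm_cpow_one_half, ← Real.sqrt_mul hs₀]
  exact Real.sqrt_le_sqrt (mul_norm_le_norm_add_ofReal hs₁ hz ht)

theorem mul_sqrt_norm_le_re_cpow_one_half (hs₀ : 0 ≤ s) (hs₁ : s ≤ 1)
    (hz : 0 ≤ z.re ∨ s * ‖z‖ ≤ |z.im|) (ht : 0 ≤ t) :
    s / 2 * √‖z‖ ≤ ((z + t) ^ (1 / 2 : ℂ)).re := by
  have key := sq_mul_norm_le_two_mul_norm_add_re hs₀ hs₁ hz ht
  rw [re_cpow_one_half, ← Real.sqrt_sq (by positivity : 0 ≤ s / 2), ← Real.sqrt_mul (sq_nonneg _)]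
  exact Real.sqrt_le_sqrt (by linarith)

end Sector

theorem norm_exp_neg_div_le {u : ℂ} {a b : ℝ} (ha : 0 < a) (hau : a ≤ ‖u‖) (hbu : b ≤ u.re) :
    ‖exp (-u) / u‖ ≤ Real.exp (-b) / a := by
  rw [norm_div, norm_exp, neg_re]
  exact div_le_div₀ (Real.exp_pos _).le (Real.exp_le_exp.mpr (neg_le_neg hbu)) ha hau

end Complex

theorem stmt6 (θ : ℝ) (hθ : θ ∈ Set.Ioo 0 (Real.pi / 2)) :
    ∃ c C : ℝ, 0 < c ∧ 0 < C ∧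
      ∀ lam : ℂ, lam ≠ 0 → |lam.arg| < Real.pi - θ →
        ∀ ξ : EuclideanSpace ℝ (Fin 2),
          ‖Complex.exp (-((lam + (‖ξ‖ : ℂ) ^ 2) ^ (1/2 : ℂ))) /
              (lam + (‖ξ‖ : ℂ) ^ 2) ^ (1/2 : ℂ)‖
            ≤ C * ‖lam‖ ^ (-(1/2) : ℝ) *
                Real.exp (-c * ‖lam‖ ^ (1/2 : ℝ)) := by
  obtain ⟨hθ₀, hθ₁⟩ := hθ
  have hs₀ : 0 < Real.sin θ := Real.sin_pos_of_pos_of_lt_pi hθ₀ (by linarith [Real.pi_pos])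
  refine ⟨Real.sin θ / 2, (√(Real.sin θ))⁻¹, by positivity, by positivity,
    fun lam hlam harg ξ => ?_⟩
  have hsector := Complex.re_nonneg_or_sin_mul_norm_le_abs_im hθ₀.le harg
  have hs₁ := Real.sin_le_one θ
  have hL : 0 < ‖lam‖ := norm_pos_iff.mpr hlam
  have hξ : (‖ξ‖ : ℂ) ^ 2 = ((‖ξ‖ ^ 2 : ℝ) : ℂ) := by push_cast; rfl
  rw [hξ, ← Real.sqrt_eq_rpow, Real.rpow_neg hL.le, ← Real.sqrt_eq_rpow]
  calc _ ≤ Real.exp (-(Real.sin θ / 2 * √‖lam‖)) / (√(Real.sin θ) * √‖lam‖) :=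
        Complex.norm_exp_neg_div_le (by positivity)
          (Complex.sqrt_mul_sqrt_norm_le_norm_cpow_one_half hs₀.le hs₁ hsector (by positivity))
          (Complex.mul_sqrt_norm_le_re_cpow_one_half hs₀.le hs₁ hsector (by positivity))
    _ = _ := by field_simp
end
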